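/- Let P and Ā be n×n real matrices with P symmetric positive definite, let 0 < α < 1, and suppose α•P − Āᵀ·P·Ā is positive semidefinite. Let D be an h×n real matrix and v, v̄, v̲ ∈ ℝʰ vectors with v̲ᵢ + vᵢ < 0 < v̄ᵢ + vᵢ for every index i, and suppose that for every index i, (Dᵢ P⁻¹ Dᵢᵀ)/(v̄ᵢ + vᵢ)² ≤ 1 and (Dᵢ P⁻¹ Dᵢᵀ)/(v̲ᵢ + vᵢ)² ≤ 1, where Dᵢ is the i-th row of D. Let s : ℕ → ℝⁿ be any sequence and define r(k) = s(k)ᵀ (Āᵀ·P·Ā) s(k) − s(k+1)ᵀ P s(k+1). If r(k) ≥ α − 1 for every k and s(0)ᵀ P s(0) ≤ 1, then for every k ∈ ℕ the state s(k) satisfies both s(k)ᵀ P s(k) ≤ 1 and v̲ᵢ ≤ (D·s(k))ᵢ − vᵢ ≤ v̄ᵢ for every index i; i.e., the trajectory stays inside the safety envelope, which is contained in the safety set. -/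

import Mathlib

set_option maxHeartbeats 1000000

open Matrix

lemma symm_dot {n : ℕ} {P : Matrix (Fin n) (Fin n) ℝ} (hP : P.IsHermitian)
    (x y : Fin n → ℝ) : x ⬝ᵥ P.mulVec y = y ⬝ᵥ P.mulVec x := by
  rw [dotProduct_mulVec, ← mulVec_transpose, dotProduct_comm]
  have : Pᵀ = P := by rw [← conjTranspose_eq_transpose_of_trivial]; exact hP
  rw [this]

lemma cs_lemma {n : ℕ} (P : Matrix (Fin n) (Fin n) ℝ) (hP : P.PosDef)
    (c x : Fin n → ℝ) :
    (c ⬝ᵥ x) ^ 2 ≤ (c ⬝ᵥ P⁻¹.mulVec c) * (x ⬝ᵥ P.mulVec x) := by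
  set y := P⁻¹.mulVec c with hy
  have hPy : P.mulVec y = c := by
    rw [hy, mulVec_mulVec, Matrix.mul_nonsing_inv _ (isUnit_iff_ne_zero.2 hP.det_pos.ne'),
      one_mulVec]
  have hcy : c ⬝ᵥ y = y ⬝ᵥ P.mulVec y := by
    rw [← hPy]; exact dotProduct_comm _ _
  have hcx : c ⬝ᵥ x = y ⬝ᵥ P.mulVec x := by
    rw [← hPy, dotProduct_comm]; exact symm_dot hP.1 _ _
  set a := x ⬝ᵥ P.mulVec x
  set b := 2 * (y ⬝ᵥ P.mulVec x)
  set cc := y ⬝ᵥ P.mulVec y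
  have hquad : ∀ t : ℝ, 0 ≤ a * t ^ 2 + b * t + cc := by
    intro t
    have h0 := hP.posSemidef.dotProduct_mulVec_nonneg (t • x + y)
    have hexp : (t • x + y) ⬝ᵥ P.mulVec (t • x + y) = a * t ^ 2 + b * t + cc := by
      have hsym := symm_dot hP.1 x y
      simp only [mulVec_add, mulVec_smul, dotProduct_add, add_dotProduct,
        dotProduct_smul, smul_dotProduct, smul_eq_mul, a, b, cc]
      rw [hsym]
      ring
    rw [star_trivial, hexp] at h0
    exact h0
  have hdisc : discrim a b cc ≤ 0 := by
    rcases eq_or_ne a 0 with ha | ha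
    · -- if a = 0, need b = 0 else quadratic goes negative; handle directly
      by_contra hlt
      push_neg at hlt
      rw [discrim, ha] at hlt
      have hb : b ^ 2 > 0 := by nlinarith
      have hbne : b ≠ 0 := by intro h; rw [h] at hb; simp at hb
      have := hquad ((-cc - 1) / b)
      rw [ha] at this
      field_simp at this
      rw [le_div_iff₀ hb] at this
      nlinarith
    · exact discrim_le_zero fun t => by nlinarith [hquad t]
  rw [discrim] at hdisc
  have : (c ⬝ᵥ x) ^ 2 = (y ⬝ᵥ P.mulVec x) ^ 2 := by rw [hcx]
  have hdisc' : (2 * (y ⬝ᵥ P.mulVec x)) ^ 2 - 4 * a * cc ≤ 0 := hdisc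
  rw [this, hcy]
  nlinarith [hdisc']

theorem stmt_10 {n h : ℕ} (P Abar : Matrix (Fin n) (Fin n) ℝ) (hP : P.PosDef)
    (α : ℝ) (hα0 : 0 < α) (hα1 : α < 1)
    (hsemi : (α • P - Abarᵀ * P * Abar).PosSemidef)
    (D : Matrix (Fin h) (Fin n) ℝ) (v vbar vlow : Fin h → ℝ)
    (hsign : ∀ i, vlow i + v i < 0 ∧ 0 < vbar i + v i)
    (hcond : ∀ i, (D i ⬝ᵥ P⁻¹.mulVec (D i)) / (vbar i + v i) ^ 2 ≤ 1 ∧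
                  (D i ⬝ᵥ P⁻¹.mulVec (D i)) / (vlow i + v i) ^ 2 ≤ 1)
    (s : ℕ → Fin n → ℝ)
    (hr : ∀ k, α - 1 ≤
      s k ⬝ᵥ (Abarᵀ * P * Abar).mulVec (s k) - s (k + 1) ⬝ᵥ P.mulVec (s (k + 1)))
    (h0 : s 0 ⬝ᵥ P.mulVec (s 0) ≤ 1) :
    ∀ k, s k ⬝ᵥ P.mulVec (s k) ≤ 1 ∧
      ∀ i, vlow i ≤ D.mulVec (s k) i - v i ∧ D.mulVec (s k) i - v i ≤ vbar i := by
  -- first: the envelope is invariant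
  have hinv : ∀ k, s k ⬝ᵥ P.mulVec (s k) ≤ 1 := by
    intro k
    induction k with
    | zero => exact h0
    | succ k ih =>
      have hs := hsemi.dotProduct_mulVec_nonneg (s k)
      rw [star_trivial, sub_mulVec, dotProduct_sub, smul_mulVec,
        dotProduct_smul, smul_eq_mul] at hs
      have := hr k
      have hmul := mul_le_mul_of_nonneg_left ih hα0.le
      linarith
  intro k
  refine ⟨hinv k, fun i => ?_⟩
  have hcs := cs_lemma P hP (D i) (s k)
  have hPinv : (0:ℝ) ≤ D i ⬝ᵥ P⁻¹.mulVec (D i) := by have := (hP.inv).posSemidef.dotProduct_mulVec_nonneg (D i); rwa [star_trivial] at this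
  have hxP : (0:ℝ) ≤ s k ⬝ᵥ P.mulVec (s k) := by have := hP.posSemidef.dotProduct_mulVec_nonneg (s k); rwa [star_trivial] at this
  have hsq : (D i ⬝ᵥ s k) ^ 2 ≤ D i ⬝ᵥ P⁻¹.mulVec (D i) := by
    calc (D i ⬝ᵥ s k) ^ 2 ≤ (D i ⬝ᵥ P⁻¹.mulVec (D i)) * (s k ⬝ᵥ P.mulVec (s k)) := hcs
    _ ≤ (D i ⬝ᵥ P⁻¹.mulVec (D i)) * 1 := by
        exact mul_le_mul_of_nonneg_left (hinv k) hPinv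
    _ = _ := mul_one _
  obtain ⟨hlo, hhi⟩ := hsign i
  obtain ⟨hc1, hc2⟩ := hcond i
  have hub : D i ⬝ᵥ P⁻¹.mulVec (D i) ≤ (vbar i + v i) ^ 2 := by
    rw [div_le_one (pow_pos hhi 2)] at hc1; exact hc1
  have hlb : D i ⬝ᵥ P⁻¹.mulVec (D i) ≤ (vlow i + v i) ^ 2 := by
    have : (0:ℝ) < (vlow i + v i) ^ 2 := by nlinarith
    rw [div_le_one this] at hc2; exact hc2
  have hDs : D.mulVec (s k) i = D i ⬝ᵥ s k := rfl
  constructor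
  · rw [hDs]; nlinarith [hsq, hlb]
  · rw [hDs]; nlinarith [hsq, hub]
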